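/- Let Φ_n : P_n → P_n be defined by Φ_n(α) := ∇(π_n α π_n^{−1}), where π_n := σ_1 ⋯ σ_{n−1}. Then the kernel of Φ_n equals P_n^n, the subgroup of P_n generated by A_{1n}, A_{2n}, …, A_{n−1,n}. Consequently the set W_n^1 of braids woven of type (n) equals the coset π_n ker(Φ_n). -/

import Mathlib

/-! Basic setup: the braid group `B_n` as a presented group.  Generators are
indexed by `ℕ`; the generator with index `i` represents `σ_i` for
`1 ≤ i ≤ n-1`, and all generators with index `0` or `≥ n` are trivialized. -/

/-- The relators of the braid group `B_n`. -/
def braidRels (n : ℕ) : Set (FreeGroup ℕ) :=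
  { r | (∃ i, 1 ≤ i ∧ i + 2 ≤ n ∧
          r = .of i * .of (i+1) * .of i * (.of (i+1) * .of i * .of (i+1))⁻¹) ∨
        (∃ i j, 1 ≤ i ∧ i + 2 ≤ j ∧ j + 1 ≤ n ∧
          r = .of i * .of j * (.of j * .of i)⁻¹) ∨
        (∃ i, (i = 0 ∨ n ≤ i) ∧ r = .of i) }

/-- The braid group on `n` strings. -/
abbrev BraidGroup (n : ℕ) := PresentedGroup (braidRels n)

/-- The standard generator `σ_i` of `B_n` (nontrivial for `1 ≤ i ≤ n-1`). -/
def σ (n i : ℕ) : BraidGroup n := PresentedGroup.of i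

/-- The transposition `(i, i+1)` of the strings `{1, …, n}`, as a permutation of `ℕ`. -/
def permOfGen (n i : ℕ) : Equiv.Perm ℕ :=
  if 1 ≤ i ∧ i + 1 ≤ n then Equiv.swap i (i+1) else 1

theorem braidRels_lift (n : ℕ) :
    ∀ r ∈ braidRels n, FreeGroup.lift (permOfGen n) r = 1 := by
  rintro r (⟨i, h1, h2, rfl⟩ | ⟨i, j, h1, h2, h3, rfl⟩ | ⟨i, hi, rfl⟩)
  · have e1 : permOfGen n i = Equiv.swap i (i+1) := if_pos ⟨h1, by omega⟩
    have e2 : permOfGen n (i+1) = Equiv.swap (i+1) (i+2) := if_pos ⟨by omega, by omega⟩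
    simp only [map_mul, map_inv, FreeGroup.lift_apply_of, e1, e2]
    rw [mul_inv_eq_one]
    have l : Equiv.swap i (i+1) * Equiv.swap (i+1) (i+2) * Equiv.swap i (i+1)
        = Equiv.swap i (i+2) := by
      have h := Equiv.swap_mul_swap_mul_swap
        (x := i+2) (y := i+1) (z := i) (by omega) (by omega)
      rwa [Equiv.swap_comm (i+1) i, Equiv.swap_comm (i+2) (i+1)] at h
    have r : Equiv.swap (i+1) (i+2) * Equiv.swap i (i+1) * Equiv.swap (i+1) (i+2)
        = Equiv.swap i (i+2) := by
      have h := Equiv.swap_mul_swap_mul_swap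
        (x := i) (y := i+1) (z := i+2) (by omega) (by omega)
      rwa [Equiv.swap_comm (i+2) i] at h
    rw [l, r]
  · have e1 : permOfGen n i = Equiv.swap i (i+1) := if_pos ⟨h1, by omega⟩
    have e2 : permOfGen n j = Equiv.swap j (j+1) := if_pos ⟨by omega, by omega⟩
    simp only [map_mul, map_inv, FreeGroup.lift_apply_of, e1, e2]
    rw [mul_inv_eq_one]
    have hd : (Equiv.swap i (i+1)).Disjoint (Equiv.swap j (j+1)) := by
      intro x
      rcases eq_or_ne x i with rfl | hxi
      · right; exact Equiv.swap_apply_of_ne_of_ne (by omega) (by omega)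
      rcases eq_or_ne x (i+1) with rfl | hxi1
      · right; exact Equiv.swap_apply_of_ne_of_ne (by omega) (by omega)
      · left; exact Equiv.swap_apply_of_ne_of_ne hxi hxi1
    exact hd.commute
  · have h : permOfGen n i = 1 := if_neg (by omega)
    simp [h]

/-- The canonical projection `Π : B_n → S_n`, sending `σ_i` to the
transposition `(i, i+1)` (strings are `1, …, n`, permutations of `ℕ`
fixing everything else). -/
def braidPerm (n : ℕ) : BraidGroup n →* Equiv.Perm ℕ :=
  PresentedGroup.toGroup (braidRels_lift n)

theorem braidPerm_σ (n i : ℕ) : braidPerm n (σ n i) = permOfGen n i :=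
  PresentedGroup.toGroup.of (braidRels_lift n)

/-- The pure braid group `P_n = ker Π`. -/
def PureBraid (n : ℕ) : Subgroup (BraidGroup n) := (braidPerm n).ker

/-- The standard pure braid generator
`A_{ij} = σ_{j-1} ⋯ σ_{i+1} σ_i² σ_{i+1}⁻¹ ⋯ σ_{j-1}⁻¹`. -/
def A (n i : ℕ) : ℕ → BraidGroup n
  | 0 => 1
  | j+1 => if j ≤ i then σ n i ^ 2 else σ n j * A n i j * (σ n j)⁻¹

/-- The group `P_n^j` of pure `j`-braids, generated by `A_{ij}` for `1 ≤ i < j`. -/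
def P (n j : ℕ) : Subgroup (BraidGroup n) :=
  Subgroup.closure ((fun i => A n i j) '' Set.Ico 1 j)

/-- Partial sums `N_1 = n_1, N_2 = n_1+n_2, …, N_k = n_1+⋯+n_k` of a list. -/
def partialSums : List ℕ → List ℕ
  | [] => []
  | a :: l => a :: (partialSums l).map (a + ·)

/-- The permutation braid `π_{n₁…n_k}`: the product `σ_1 σ_2 ⋯ σ_{n-1}` with the
letters `σ_{N_1}, …, σ_{N_{k-1}}` omitted. -/
def piBraid (n : ℕ) (ns : List ℕ) : BraidGroup n :=
  (((List.range n).filter fun i => decide (1 ≤ i ∧ i ∉ partialSums ns)).map (σ n)).prod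

/-- The permutation braid `π_n = σ_1 σ_2 ⋯ σ_{n-1}`. -/
def piN (n : ℕ) : BraidGroup n := piBraid n [n]

/-- A braid is woven of type `(n₁, …, n_k)` if it can be written as
`π_{n₁…n_k} β_{N_1} β_{N_2} ⋯ β_{N_k}` with each `β_{N_i} ∈ P_n^{N_i}`. -/
def IsWovenOfType (n : ℕ) (ns : List ℕ) (w : BraidGroup n) : Prop :=
  ∃ b : ℕ → BraidGroup n,
    (∀ m ∈ partialSums ns, b m ∈ P n m) ∧
    w = piBraid n ns * ((partialSums ns).map b).prod

/-- `W_n^1 = π_n P_n^n`, the set of woven braids of type `(n)`. -/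
def W1 (n : ℕ) : Set (BraidGroup n) := { w | ∃ b ∈ P n n, w = piN n * b }
theorem σ_sq_mem (n i : ℕ) : σ n i ^ 2 ∈ PureBraid n := by
  have h : braidPerm n (σ n i) ^ 2 = 1 := by
    rw [braidPerm_σ]
    unfold permOfGen
    split_ifs
    · rw [sq]; exact Equiv.swap_mul_self _ _
    · simp
  simpa [PureBraid, MonoidHom.mem_ker, map_pow] using h

theorem A_mem_pure (n i j : ℕ) : A n i j ∈ PureBraid n := by
  induction j with
  | zero => exact one_mem _
  | succ j ih =>
    show A n i (j+1) ∈ _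
    rw [A]
    split_ifs
    · exact σ_sq_mem n i
    · simp only [PureBraid, MonoidHom.mem_ker, map_mul, map_inv] at ih ⊢
      simp [ih]

/-- The generator `A_{ij}` as an element of the pure braid group `P_n`. -/
def Agen (n i j : ℕ) : ↥(PureBraid n) := ⟨A n i j, A_mem_pure n i j⟩

/-- `f` is the homomorphism `∇ : P_n → P_n` of the paper, determined by
`∇(A_{1j}) = 1` and `∇(A_{ij}) = A_{i-1,j-1}` for `i ≥ 2`. -/
def IsNabla (n : ℕ) (f : ↥(PureBraid n) →* ↥(PureBraid n)) : Prop :=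
  (∀ j, 1 < j → j ≤ n → f (Agen n 1 j) = 1) ∧
  (∀ i j, 2 ≤ i → i < j → j ≤ n → f (Agen n i j) = Agen n (i-1) (j-1))

/-- Conjugation by `π_n` as a homomorphism `P_n → P_n`, `α ↦ π_n α π_n⁻¹`. -/
def conjPiHom (n : ℕ) : ↥(PureBraid n) →* ↥(PureBraid n) where
  toFun α := ⟨piN n * ↑α * (piN n)⁻¹,
    Subgroup.Normal.conj_mem (MonoidHom.normal_ker _) ↑α α.2 (piN n)⟩
  map_one' := by ext; simp
  map_mul' a b := by ext; push_cast; group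

/-- The product `β ∇(β) ∇²(β) ⋯ ∇^{m-1}(β)`. -/
def weave (n : ℕ) (f : ↥(PureBraid n) →* ↥(PureBraid n)) (m : ℕ)
    (β : ↥(PureBraid n)) : ↥(PureBraid n) :=
  ((List.range m).map fun t => (⇑f)^[t] β).prod

/-- The set `K_n = { β ∇(β) ∇²(β) ⋯ ∇^{n-2}(β) : β ∈ P_n^n }`. -/
def Kset (n : ℕ) (f : ↥(PureBraid n) →* ↥(PureBraid n)) : Set ↥(PureBraid n) :=
  { k | ∃ β : ↥(PureBraid n), (β : BraidGroup n) ∈ P n n ∧ k = weave n f (n-1) β }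

/-!
Every pure braid is a product of the generators `A_{ij}`: modulo the squares `σ_t²` every braid
equals a staircase word, and a staircase word with trivial permutation is trivial (the Coxeter
presentation of `S_n`), while the subgroup generated by the `A_{ij}` is normal and contains the
squares. The `σ_t` with `t ≤ n - 2` normalize `P_n^n`, so every pure braid factors as `p q` with
`p ∈ P_n^n` and `q` a word in the `A_{ij}` with `j < n`. Conjugation by `π_n` shifts `A_{ij}` to
`A_{i+1,j+1}` for `j < n`, so `Φ_n q = q`; and it sends `A_{in}` to a pure conjugate of
`A_{1,i+1}`, which `∇` kills. Hence `Φ_n (p q) = q`, and `ker Φ_n = P_n^n`.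
-/

namespace Subgroup

variable {G : Type*} [Group G]

theorem subgroupOf_closure_eq {K : Subgroup G} {S : Set G} (hS : S ⊆ K) :
    (closure S).subgroupOf K = closure (K.subtype ⁻¹' S) := by
  have himage : K.subtype '' (K.subtype ⁻¹' S) = S := by
    rwa [Set.image_preimage_eq_iff, coe_subtype, Subtype.range_coe]
  conv_lhs => rw [subgroupOf, ← himage, ← MonoidHom.map_closure,
    comap_map_eq_self_of_injective K.subtype_injective]

theorem mem_normalizer_closure_of_conj {S : Set G} {g : G}
    (hmaps : ∀ x ∈ S, g * x * g⁻¹ ∈ closure S)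
    (hhits : ∀ x ∈ S, ∃ y ∈ closure S, g * y * g⁻¹ = x) :
    g ∈ normalizer (closure S : Set G) := by
  rw [mem_normalizer_iff_map_conj_eq]
  apply le_antisymm
  · rw [MonoidHom.map_closure, closure_le]
    rintro _ ⟨x, hx, rfl⟩
    exact hmaps x hx
  · rw [closure_le]
    intro x hx
    obtain ⟨y, hy, rfl⟩ := hhits x hx
    exact ⟨y, hy, rfl⟩

end Subgroup

theorem Commute.conj_conj {G : Type*} [Group G] {a b : G} (h : Commute a b) (x : G) :
    a * (b * x * b⁻¹) * a⁻¹ = b * (a * x * a⁻¹) * b⁻¹ := by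
  calc a * (b * x * b⁻¹) * a⁻¹ = (a * b) * x * (a * b)⁻¹ := by group
    _ = b * (a * x * a⁻¹) * b⁻¹ := by rw [h.eq]; group

theorem mk_eq_one_of_mem_braidRels {n : ℕ} {r : FreeGroup ℕ} (h : r ∈ braidRels n) :
    PresentedGroup.mk (braidRels n) r = 1 :=
  (QuotientGroup.eq_one_iff r).mpr (Subgroup.subset_normalClosure h)

theorem σ_eq_one {n i : ℕ} (h : i = 0 ∨ n ≤ i) : σ n i = 1 :=
  mk_eq_one_of_mem_braidRels (Or.inr (Or.inr ⟨i, h, rfl⟩))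

theorem σ_braid {n i : ℕ} (h1 : 1 ≤ i) (h2 : i + 2 ≤ n) :
    σ n i * σ n (i+1) * σ n i = σ n (i+1) * σ n i * σ n (i+1) := by
  have := mk_eq_one_of_mem_braidRels (n := n) (Or.inl ⟨i, h1, h2, rfl⟩)
  rwa [map_mul, map_inv, mul_inv_eq_one] at this

theorem σ_commute {n i j : ℕ} (h : i + 2 ≤ j) : Commute (σ n i) (σ n j) := by
  rcases Nat.eq_zero_or_pos i with rfl | hi
  · rw [σ_eq_one (Or.inl rfl)]; exact Commute.one_left _
  rcases le_or_gt n j with hj | hj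
  · rw [σ_eq_one (n := n) (Or.inr hj)]; exact Commute.one_right _
  · have := mk_eq_one_of_mem_braidRels (n := n) (Or.inr (Or.inl ⟨i, j, hi, h, hj, rfl⟩))
    rwa [map_mul, map_inv, mul_inv_eq_one] at this

theorem σ_mul_σ_succ_mul_σ_inv {n t : ℕ} (h1 : 1 ≤ t) (h2 : t + 2 ≤ n) :
    σ n t * σ n (t+1) * (σ n t)⁻¹ = (σ n (t+1))⁻¹ * σ n t * σ n (t+1) := by
  calc σ n t * σ n (t+1) * (σ n t)⁻¹
      = (σ n (t+1))⁻¹ * (σ n (t+1) * σ n t * σ n (t+1)) * (σ n t)⁻¹ := by group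
    _ = (σ n (t+1))⁻¹ * (σ n t * σ n (t+1) * σ n t) * (σ n t)⁻¹ := by rw [σ_braid h1 h2]
    _ = (σ n (t+1))⁻¹ * σ n t * σ n (t+1) := by group

theorem σ_succ_mul_σ_mul_σ_succ_inv {n t : ℕ} (h1 : 1 ≤ t) (h2 : t + 2 ≤ n) :
    σ n (t+1) * σ n t * (σ n (t+1))⁻¹ = (σ n t)⁻¹ * σ n (t+1) * σ n t := by
  calc σ n (t+1) * σ n t * (σ n (t+1))⁻¹
      = (σ n t)⁻¹ * (σ n t * σ n (t+1) * σ n t) * (σ n (t+1))⁻¹ := by group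
    _ = (σ n t)⁻¹ * (σ n (t+1) * σ n t * σ n (t+1)) * (σ n (t+1))⁻¹ := by
        rw [σ_braid h1 h2]
    _ = (σ n t)⁻¹ * σ n (t+1) * σ n t := by group

theorem σ_mul_σ_succ_sq_mul_σ_inv {n t : ℕ} (h1 : 1 ≤ t) (h2 : t + 2 ≤ n) :
    σ n t * σ n (t+1) ^ 2 * (σ n t)⁻¹ = (σ n (t+1))⁻¹ * σ n t ^ 2 * σ n (t+1) := by
  calc σ n t * σ n (t+1) ^ 2 * (σ n t)⁻¹ = (σ n t * σ n (t+1) * (σ n t)⁻¹) ^ 2 := by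
        simp only [sq]; group
    _ = (σ n (t+1))⁻¹ * σ n t ^ 2 * σ n (t+1) := by
        rw [σ_mul_σ_succ_mul_σ_inv h1 h2]; simp only [sq]; group

theorem A_self_succ (n i : ℕ) : A n i (i+1) = σ n i ^ 2 := by
  rw [A, if_pos le_rfl]

theorem A_succ {n i j : ℕ} (h : i < j) : A n i (j+1) = σ n j * A n i j * (σ n j)⁻¹ := by
  rw [A, if_neg (by omega)]

theorem σ_commute_A_of_add_two_le {n t i : ℕ} (h : t + 2 ≤ i) (j : ℕ) :
    Commute (σ n t) (A n i j) := by
  induction j with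
  | zero => exact Commute.one_right _
  | succ j ih =>
    rw [A]
    split_ifs
    · exact (σ_commute h).pow_right 2
    · have hcj : Commute (σ n t) (σ n j) := σ_commute (by omega)
      exact (hcj.mul_right ih).mul_right hcj.inv_right

theorem σ_commute_A_of_lt {n t i j : ℕ} (hij : i < j) (h : j < t) :
    Commute (σ n t) (A n i j) := by
  induction j, hij using Nat.le_induction with
  | base => rw [A_self_succ]; exact ((σ_commute (by omega)).symm.pow_right 2)
  | succ j hij ih =>
    have hcj : Commute (σ n t) (σ n j) := (σ_commute (by omega)).symm
    rw [A_succ hij]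
    exact (hcj.mul_right (ih (by omega))).mul_right hcj.inv_right

theorem σ_commute_A_of_lt_of_add_two_le {n t i j : ℕ} (hi1 : 1 ≤ i) (hit : i < t)
    (htj : t + 2 ≤ j) (hjn : j ≤ n) : Commute (σ n t) (A n i j) := by
  induction j, htj using Nat.le_induction with
  | base =>
    -- `σ_t` is the conjugate of `σ_{t+1}` by `σ_{t+1} σ_t`,
    -- and `σ_{t+1}` commutes with `A_{it}`
    rw [A_succ (by omega), A_succ (by omega)]
    have hb := σ_braid (show 1 ≤ t by omega) (show t + 2 ≤ n by omega)
    have hA : Commute (σ n (t+1)) (A n i t) := σ_commute_A_of_lt hit (by omega)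
    have hconj : (σ n (t+1) * σ n t) * σ n (t+1) * (σ n (t+1) * σ n t)⁻¹ = σ n t := by
      rw [← hb]; group
    have := hA.map (MulAut.conj (σ n (t+1) * σ n t))
    rw [MulAut.conj_apply, MulAut.conj_apply, hconj] at this
    convert this using 1
    group
  | succ j htj ih =>
    have hcj : Commute (σ n t) (σ n j) := σ_commute (by omega)
    rw [A_succ (by omega)]
    exact (hcj.mul_right (ih (by omega))).mul_right hcj.inv_right

theorem σ_conj_A {n i j : ℕ} (h1 : 1 ≤ i) (h2 : i + 2 ≤ j) (hjn : j ≤ n) :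
    σ n i * A n i j * (σ n i)⁻¹ = A n (i+1) j := by
  induction j, h2 using Nat.le_induction with
  | base =>
    rw [A_succ (by omega), A_self_succ, A_self_succ]
    calc σ n i * (σ n (i+1) * σ n i ^ 2 * (σ n (i+1))⁻¹) * (σ n i)⁻¹
        = σ n i * (σ n (i+1) * σ n i * (σ n (i+1))⁻¹) ^ 2 * (σ n i)⁻¹ := by
          simp only [sq]; group
      _ = σ n (i+1) ^ 2 := by
          rw [σ_succ_mul_σ_mul_σ_succ_inv h1 (by omega)]; simp only [sq]; group
  | succ j h2 ih =>
    rw [A_succ (by omega), A_succ (by omega), (σ_commute (n := n) h2).conj_conj,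
      ih (by omega)]

theorem σ_conj_A_succ {n i j : ℕ} (h1 : 1 ≤ i) (h2 : i + 2 ≤ j) (hjn : j ≤ n) :
    σ n i * A n (i+1) j * (σ n i)⁻¹ = (A n (i+1) j)⁻¹ * A n i j * A n (i+1) j := by
  induction j, h2 using Nat.le_induction with
  | base =>
    rw [A_self_succ n (i+1), A_succ (show i < i+1 by omega), A_self_succ,
      σ_mul_σ_succ_sq_mul_σ_inv h1 (by omega)]
    group
  | succ j h2 ih =>
    rw [A_succ (by omega), A_succ (by omega), (σ_commute (n := n) h2).conj_conj,
      ih (by omega)]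
    group

theorem σ_commute_A {n t i j : ℕ} (hi : 1 ≤ i) (hij : i < j) (hjn : j ≤ n)
    (h1 : t + 1 ≠ i) (h2 : t ≠ i) (h3 : t + 1 ≠ j) (h4 : t ≠ j) :
    Commute (σ n t) (A n i j) := by
  rcases Nat.lt_or_ge t i with hti | hit
  · exact σ_commute_A_of_add_two_le (by omega) j
  rcases Nat.lt_or_ge j t with hjt | htj
  · exact σ_commute_A_of_lt hij hjt
  · exact σ_commute_A_of_lt_of_add_two_le hi (by omega) (by omega) hjn

def closureA (n m : ℕ) : Subgroup (BraidGroup n) :=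
  Subgroup.closure {x | ∃ i j, 1 ≤ i ∧ i < j ∧ j ≤ m ∧ x = A n i j}

theorem A_mem_closureA {n m i j : ℕ} (hi : 1 ≤ i) (hij : i < j) (hjm : j ≤ m) :
    A n i j ∈ closureA n m :=
  Subgroup.subset_closure ⟨i, j, hi, hij, hjm, rfl⟩

theorem σ_conj_A_mem_closureA {n t i j : ℕ} (hi : 1 ≤ i) (hij : i < j) (hjn : j ≤ n) :
    σ n t * A n i j * (σ n t)⁻¹ ∈ closureA n n := by
  have hA : ∀ {i j}, 1 ≤ i → i < j → j ≤ n → A n i j ∈ closureA n n := A_mem_closureA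
  by_cases ht : t = 0 ∨ n ≤ t
  · rw [σ_eq_one ht, one_mul, inv_one, mul_one]
    exact hA hi hij hjn
  by_cases hti : t + 1 = i
  · subst hti
    rw [σ_conj_A_succ (by omega) (by omega) hjn]
    exact mul_mem (mul_mem (inv_mem (hA hi hij hjn)) (hA (by omega) (by omega) hjn))
      (hA hi hij hjn)
  by_cases hti' : t = i
  · subst hti'
    by_cases hj : j = t + 1
    · subst hj
      rw [A_self_succ, ((Commute.refl (σ n t)).pow_right 2).mul_inv_cancel, ← A_self_succ]
      exact hA hi hij hjn
    · rw [σ_conj_A hi (by omega) hjn]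
      exact hA (by omega) (by omega) hjn
  by_cases htj : t + 1 = j
  · subst htj
    have hsq : A n t (t+1) ∈ closureA n n := hA (by omega) (by omega) hjn
    rw [A_succ (by omega), show σ n t * (σ n t * A n i t * (σ n t)⁻¹) * (σ n t)⁻¹
      = σ n t ^ 2 * A n i t * (σ n t ^ 2)⁻¹ by simp only [sq]; group, ← A_self_succ]
    exact mul_mem (mul_mem hsq (hA hi (by omega) (by omega))) (inv_mem hsq)
  by_cases htj' : t = j
  · subst htj'
    rw [← A_succ hij]
    exact hA hi (by omega) (by omega)
  rw [(σ_commute_A hi hij hjn hti hti' htj htj').mul_inv_cancel]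
  exact hA hi hij hjn

theorem σ_sq_mem_closureA (n t : ℕ) : σ n t ^ 2 ∈ closureA n n := by
  rcases em (1 ≤ t ∧ t + 1 ≤ n) with ht | ht
  · rw [← A_self_succ]; exact A_mem_closureA ht.1 (by omega) ht.2
  · rw [σ_eq_one (by omega), one_pow]; exact one_mem _

instance closureA_normal (n : ℕ) : (closureA n n).Normal := by
  rw [← Subgroup.normalizer_eq_top_iff, eq_top_iff, ← PresentedGroup.closure_range_of,
    Subgroup.closure_le]
  rintro _ ⟨t, rfl⟩
  change σ n t ∈ _
  have hmaps : ∀ x ∈ {x | ∃ i j, 1 ≤ i ∧ i < j ∧ j ≤ n ∧ x = A n i j},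
      σ n t * x * (σ n t)⁻¹ ∈ closureA n n := by
    rintro _ ⟨i, j, hi, hij, hjn, rfl⟩
    exact σ_conj_A_mem_closureA hi hij hjn
  have hsq := σ_sq_mem_closureA n t
  -- `σ_t` is invertible modulo `closureA n n`, its square being one of the generators
  refine Subgroup.mem_normalizer_closure_of_conj hmaps fun x hx => ?_
  refine ⟨(σ n t ^ 2)⁻¹ * (σ n t * x * (σ n t)⁻¹) * σ n t ^ 2,
    mul_mem (mul_mem (inv_mem hsq) (hmaps x hx)) hsq, ?_⟩
  simp only [sq]; group

theorem A_mem_P {n i : ℕ} (hi : 1 ≤ i) (hin : i < n) : A n i n ∈ P n n :=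
  Subgroup.subset_closure ⟨i, ⟨hi, hin⟩, rfl⟩

theorem σ_mem_normalizer_P {n t : ℕ} (ht : 1 ≤ t) (htn : t + 2 ≤ n) :
    σ n t ∈ Subgroup.normalizer (P n n : Set (BraidGroup n)) := by
  apply Subgroup.mem_normalizer_closure_of_conj
  · rintro _ ⟨i, ⟨hi, hin⟩, rfl⟩
    by_cases hti : t + 1 = i
    · subst hti
      rw [σ_conj_A_succ ht (by omega) le_rfl]
      exact mul_mem (mul_mem (inv_mem (A_mem_P hi hin)) (A_mem_P ht (by omega)))
        (A_mem_P hi hin)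
    by_cases hti' : t = i
    · subst hti'
      rw [σ_conj_A ht (by omega) le_rfl]
      exact A_mem_P (by omega) (by omega)
    rw [(σ_commute_A hi hin le_rfl hti hti' (by omega) (by omega)).mul_inv_cancel]
    exact A_mem_P hi hin
  · rintro _ ⟨i, ⟨hi, hin⟩, rfl⟩
    by_cases hti : t + 1 = i
    · subst hti
      exact ⟨A n t n, A_mem_P ht (by omega), σ_conj_A ht (by omega) le_rfl⟩
    by_cases hti' : t = i
    · subst hti'
      refine ⟨A n t n * A n (t+1) n * (A n t n)⁻¹, mul_mem (mul_mem (A_mem_P hi hin)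
        (A_mem_P (by omega) (by omega))) (inv_mem (A_mem_P hi hin)), ?_⟩
      calc σ n t * (A n t n * A n (t+1) n * (A n t n)⁻¹) * (σ n t)⁻¹
          = (σ n t * A n t n * (σ n t)⁻¹) * (σ n t * A n (t+1) n * (σ n t)⁻¹) *
            (σ n t * A n t n * (σ n t)⁻¹)⁻¹ := by group
        _ = A n t n := by
          rw [σ_conj_A ht (by omega) le_rfl, σ_conj_A_succ ht (by omega) le_rfl]; group
    exact ⟨A n i n, A_mem_P hi hin,
      (σ_commute_A hi hin le_rfl hti hti' (by omega) (by omega)).mul_inv_cancel⟩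

theorem A_mem_normalizer_P {n i j : ℕ} (hi : 1 ≤ i) (hij : i < j) (hjn : j < n) :
    A n i j ∈ Subgroup.normalizer (P n n : Set (BraidGroup n)) := by
  induction j, hij using Nat.le_induction with
  | base => rw [A_self_succ]; exact pow_mem (σ_mem_normalizer_P hi (by omega)) 2
  | succ j hij ih =>
    have hσ := σ_mem_normalizer_P (n := n) (t := j) (by omega) (by omega)
    rw [A_succ hij]
    exact mul_mem (mul_mem hσ (ih (by omega))) (inv_mem hσ)

theorem closureA_eq_P_sup {n : ℕ} : closureA n n = P n n ⊔ closureA n (n-1) := by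
  apply le_antisymm
  · rw [closureA, Subgroup.closure_le]
    rintro _ ⟨i, j, hi, hij, hjn, rfl⟩
    rcases eq_or_lt_of_le hjn with rfl | hjn
    · exact Subgroup.mem_sup_left (A_mem_P hi hij)
    · exact Subgroup.mem_sup_right (A_mem_closureA hi hij (by omega))
  · refine sup_le ?_ ?_
    · rw [P, Subgroup.closure_le]
      rintro _ ⟨i, ⟨hi, hin⟩, rfl⟩
      exact A_mem_closureA hi hin le_rfl
    · rw [closureA, Subgroup.closure_le]
      rintro _ ⟨i, j, hi, hij, hjn, rfl⟩
      exact A_mem_closureA hi hij (by omega)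

theorem mem_closureA_iff_exists_mul {n : ℕ} {x : BraidGroup n} :
    x ∈ closureA n n ↔ ∃ p ∈ P n n, ∃ h ∈ closureA n (n-1), p * h = x := by
  have hle : closureA n (n-1) ≤ Subgroup.normalizer (P n n : Set (BraidGroup n)) := by
    rw [closureA, Subgroup.closure_le]
    rintro _ ⟨i, j, hi, hij, hjn, rfl⟩
    exact A_mem_normalizer_P hi hij (by omega)
  rw [closureA_eq_P_sup, ← SetLike.mem_coe,
    Subgroup.coe_mul_of_right_le_normalizer_left _ _ hle]
  rfl

def σDesc (n m : ℕ) : ℕ → BraidGroup n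
  | 0 => 1
  | l+1 => σ n (m+l) * σDesc n m l

theorem σDesc_succ_eq_mul_σ (n m l : ℕ) : σDesc n m (l+1) = σDesc n (m+1) l * σ n m := by
  induction l with
  | zero => simp [σDesc]
  | succ l ih =>
    rw [σDesc, ih, σDesc, show m + 1 + l = m + (l+1) by omega, mul_assoc]

theorem σ_commute_σDesc {n t m : ℕ} (l : ℕ) (h : t + 2 ≤ m ∨ m + l + 1 ≤ t) :
    Commute (σ n t) (σDesc n m l) := by
  induction l with
  | zero => exact Commute.one_right _
  | succ l ih =>
    have hσ : Commute (σ n t) (σ n (m+l)) := by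
      rcases h with h | h
      · exact σ_commute (by omega)
      · exact (σ_commute (by omega)).symm
    exact hσ.mul_right (ih (by omega))

theorem σDesc_mul_σ {n m u l : ℕ} (hm : 1 ≤ m) (hmu : m ≤ u) (hl : u + 2 ≤ m + l)
    (hln : m + l ≤ n) : σDesc n m l * σ n (u+1) = σ n u * σDesc n m l := by
  induction l with
  | zero => omega
  | succ l ih =>
    rcases Nat.lt_or_ge (m + l) (u + 2) with hlt | hge
    · obtain ⟨l, rfl⟩ : ∃ l', l = l' + 1 := ⟨l - 1, by omega⟩
      obtain rfl : u = m + l := by omega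
      have hc : Commute (σ n (m + l + 1)) (σDesc n m l) := σ_commute_σDesc l (by omega)
      simp only [σDesc]
      rw [show m + (l+1) = m + l + 1 by omega, mul_assoc, mul_assoc, ← hc.eq, ← mul_assoc,
        ← mul_assoc, ← mul_assoc, ← σ_braid (by omega) (by omega), mul_assoc]
    · rw [σDesc, mul_assoc, ih hge (by omega), ← mul_assoc, ← mul_assoc,
        (σ_commute (n := n) (show u + 2 ≤ m + l by omega)).symm.eq]

theorem braidPerm_σDesc_apply_of_not_mem {n m x : ℕ} (l : ℕ) (h : x < m ∨ m + l < x) :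
    braidPerm n (σDesc n m l) x = x := by
  induction l with
  | zero => rfl
  | succ l ih =>
    rw [σDesc, map_mul, Equiv.Perm.mul_apply, ih (by omega), braidPerm_σ, permOfGen]
    split_ifs
    · exact Equiv.swap_apply_of_ne_of_ne (by omega) (by omega)
    · rfl

theorem braidPerm_σDesc_apply_self {n m : ℕ} (l : ℕ) (hm : 1 ≤ m) (hml : m + l ≤ n) :
    braidPerm n (σDesc n m l) m = m + l := by
  induction l with
  | zero => rfl
  | succ l ih =>
    rw [σDesc, map_mul, Equiv.Perm.mul_apply, ih (by omega), braidPerm_σ, permOfGen,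
      if_pos ⟨by omega, by omega⟩, Equiv.swap_apply_left]
    rfl

/-- Under `B_n → S_n` the factors `σDesc n m l` with `m + l = k` map to the coset representatives
of `S_{k-1}` in `S_k`, so these are the words of the Coxeter normal form of `S_n`. -/
def staircase (n : ℕ) : ℕ → Set (BraidGroup n)
  | 0 => {1}
  | k+1 =>
    {x | ∃ y ∈ staircase n k, ∃ m l, 1 ≤ m ∧ m + l = k + 1 ∧ x = y * σDesc n m l}

theorem braidPerm_staircase_apply_of_lt {n k x : ℕ} {y : BraidGroup n}
    (hy : y ∈ staircase n k) (hkx : k < x) : braidPerm n y x = x := by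
  induction k generalizing y with
  | zero => rw [hy]; rfl
  | succ k ih =>
    obtain ⟨y, hy, m, l, -, hml, rfl⟩ := hy
    rw [map_mul, Equiv.Perm.mul_apply, braidPerm_σDesc_apply_of_not_mem l (by omega),
      ih hy (by omega)]

theorem eq_one_of_mem_staircase {n k : ℕ} (hkn : k ≤ n) {y : BraidGroup n}
    (hy : y ∈ staircase n k) (hperm : braidPerm n y = 1) : y = 1 := by
  induction k generalizing y with
  | zero => exact hy
  | succ k ih =>
    obtain ⟨y, hy, m, l, hm, hml, rfl⟩ := hy
    -- the strand at position `m` is moved to `k + 1`, so the last factor must be trivial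
    have hm_eq : m = k + 1 := by
      have h := congrArg (· m) hperm
      simp only [map_mul, Equiv.Perm.mul_apply, Equiv.Perm.one_apply] at h
      rwa [braidPerm_σDesc_apply_self l hm (by omega), hml,
        braidPerm_staircase_apply_of_lt hy (by omega), eq_comm] at h
    obtain rfl : l = 0 := by omega
    rw [σDesc, mul_one] at hperm ⊢
    exact ih (by omega) hy hperm

instance pureBraid_normal (n : ℕ) : (PureBraid n).Normal := MonoidHom.normal_ker _

def σSqNormalClosure (n : ℕ) : Subgroup (BraidGroup n) :=
  Subgroup.normalClosure (Set.range fun t => σ n t ^ 2)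

instance σSqNormalClosure_normal (n : ℕ) : (σSqNormalClosure n).Normal :=
  Subgroup.normalClosure_normal

theorem σ_sq_mem_σSqNormalClosure (n t : ℕ) : σ n t ^ 2 ∈ σSqNormalClosure n :=
  Subgroup.subset_normalClosure ⟨t, rfl⟩

theorem mk_σ_inv (n t : ℕ) :
    (((σ n t)⁻¹ : BraidGroup n) : BraidGroup n ⧸ σSqNormalClosure n) = σ n t := by
  rw [QuotientGroup.eq, inv_inv, ← sq]
  exact σ_sq_mem_σSqNormalClosure n t

theorem one_mem_staircase (n k : ℕ) : (1 : BraidGroup n) ∈ staircase n k := by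
  cases k with
  | zero => rfl
  | succ k => exact ⟨1, one_mem_staircase n k, k + 1, 0, by omega, rfl, rfl⟩

theorem exists_staircase_mk_mul_σ {n k : ℕ} (hkn : k ≤ n) {x : BraidGroup n}
    (hx : x ∈ staircase n k) {t : ℕ} (ht : 1 ≤ t) (htk : t < k) :
    ∃ y ∈ staircase n k,
      ((x * σ n t : BraidGroup n) : BraidGroup n ⧸ σSqNormalClosure n) = y := by
  induction k generalizing x t with
  | zero => omega
  | succ k ih =>
    obtain ⟨x, hx, m, l, hm, hml, rfl⟩ := hx
    rcases Nat.lt_or_ge (t + 1) m with htm | htm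
    · obtain ⟨y, hy, hxy⟩ := ih (by omega) hx ht (by omega)
      refine ⟨y * σDesc n m l, ⟨y, hy, m, l, hm, hml, rfl⟩, ?_⟩
      rw [mul_assoc, ← (σ_commute_σDesc l (Or.inl htm)).eq, ← mul_assoc,
        QuotientGroup.mk_mul, hxy, QuotientGroup.mk_mul]
    obtain rfl | rfl | htm := (show t + 1 = m ∨ t = m ∨ m < t by omega)
    · exact ⟨x * σDesc n t (l+1), ⟨x, hx, t, l + 1, ht, by omega, rfl⟩,
        by rw [mul_assoc, ← σDesc_succ_eq_mul_σ]⟩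
    · obtain ⟨l, rfl⟩ : ∃ l', l = l' + 1 := ⟨l - 1, by omega⟩
      refine ⟨x * σDesc n (t+1) l, ⟨x, hx, t + 1, l, by omega, by omega, rfl⟩, ?_⟩
      rw [σDesc_succ_eq_mul_σ, QuotientGroup.eq]
      convert inv_mem (σ_sq_mem_σSqNormalClosure n t) using 1
      group
    · obtain ⟨u, rfl⟩ : ∃ u, t = u + 1 := ⟨t - 1, by omega⟩
      obtain ⟨y, hy, hxy⟩ := ih (by omega) hx (t := u) (by omega) (by omega)
      refine ⟨y * σDesc n m l, ⟨y, hy, m, l, hm, hml, rfl⟩, ?_⟩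
      rw [mul_assoc, σDesc_mul_σ hm (by omega) (by omega) (by omega), ← mul_assoc,
        QuotientGroup.mk_mul, hxy, QuotientGroup.mk_mul]

theorem exists_staircase_mk_eq (n : ℕ) (x : BraidGroup n) :
    ∃ y ∈ staircase n n, (x : BraidGroup n ⧸ σSqNormalClosure n) = y := by
  have hx : x ∈ Subgroup.closure (Set.range (σ n)) := by
    rw [show Set.range (σ n) = Set.range PresentedGroup.of from rfl,
      PresentedGroup.closure_range_of]
    trivial
  have hσ : ∀ (y : BraidGroup n) t, y ∈ staircase n n →
      ∃ y' ∈ staircase n n,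
        ((y * σ n t : BraidGroup n) : BraidGroup n ⧸ σSqNormalClosure n) = y' := by
    intro y t hy
    by_cases ht : 1 ≤ t ∧ t < n
    · exact exists_staircase_mk_mul_σ le_rfl hy ht.1 ht.2
    · exact ⟨y, hy, by rw [σ_eq_one (by omega), mul_one]⟩
  induction hx using Subgroup.closure_induction_right with
  | one => exact ⟨1, one_mem_staircase n n, rfl⟩
  | mul_right x _ _ hs ih =>
    obtain ⟨t, rfl⟩ := hs
    obtain ⟨y, hy, hxy⟩ := ih
    obtain ⟨y', hy', hyy'⟩ := hσ y t hy
    exact ⟨y', hy', by rw [QuotientGroup.mk_mul, hxy, ← hyy', QuotientGroup.mk_mul]⟩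
  | mul_inv_cancel x _ _ hs ih =>
    obtain ⟨t, rfl⟩ := hs
    obtain ⟨y, hy, hxy⟩ := ih
    obtain ⟨y', hy', hyy'⟩ := hσ y t hy
    refine ⟨y', hy', ?_⟩
    rw [QuotientGroup.mk_mul, hxy, mk_σ_inv, ← hyy', QuotientGroup.mk_mul]

theorem pureBraid_le_σSqNormalClosure (n : ℕ) : PureBraid n ≤ σSqNormalClosure n := by
  intro x hx
  obtain ⟨y, hy, hxy⟩ := exists_staircase_mk_eq n x
  have hsq_pure : σSqNormalClosure n ≤ PureBraid n :=
    Subgroup.normalClosure_le_normal (by rintro _ ⟨t, rfl⟩; exact σ_sq_mem n t)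
  have hxy' : x⁻¹ * y ∈ PureBraid n := hsq_pure (QuotientGroup.eq.mp hxy)
  have hy_pure : braidPerm n y = 1 := by
    have := MonoidHom.mem_ker.mp hxy'
    rwa [map_mul, map_inv, MonoidHom.mem_ker.mp hx, inv_one, one_mul] at this
  rw [← QuotientGroup.eq_one_iff, hxy, eq_one_of_mem_staircase le_rfl hy hy_pure]
  rfl

theorem pureBraid_le_closureA (n : ℕ) : PureBraid n ≤ closureA n n :=
  (pureBraid_le_σSqNormalClosure n).trans <| Subgroup.normalClosure_le_normal <| by
    rintro _ ⟨t, rfl⟩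
    exact σ_sq_mem_closureA n t

def σAsc (n b : ℕ) : BraidGroup n := ((List.range' 1 b).map (σ n)).prod

theorem σAsc_succ (n b : ℕ) : σAsc n (b+1) = σAsc n b * σ n (b+1) := by
  simp [σAsc, List.range'_concat, Nat.add_comm 1 b]

theorem piN_eq_σAsc (n : ℕ) : piN n = σAsc n (n-1) := by
  have hfilter : (List.range n).filter (fun i => decide (1 ≤ i ∧ i ∉ [n]))
      = List.range' 1 (n-1) := by
    rcases n with _ | n
    · rfl
    rw [List.range_eq_range', List.range'_succ, List.filter_cons_of_neg (by simp),
      List.filter_eq_self.mpr fun a ha => ?_]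
    · simp
    · simp only [List.mem_range'_1] at ha
      simp only [List.mem_singleton, decide_eq_true_eq]
      omega
  rw [piN, piBraid, show partialSums [n] = [n] from rfl, hfilter, σAsc]

theorem σ_commute_σAsc {n t b : ℕ} (h : b + 2 ≤ t) : Commute (σ n t) (σAsc n b) := by
  induction b with
  | zero => exact Commute.one_right _
  | succ b ih =>
    rw [σAsc_succ]
    exact (ih (by omega)).mul_right (σ_commute (by omega)).symm

theorem σAsc_mul_σ {n t b : ℕ} (ht : 1 ≤ t) (htb : t < b) (hbn : b < n) :
    σAsc n b * σ n t = σ n (t+1) * σAsc n b := by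
  induction b, htb using Nat.le_induction with
  | base =>
    obtain ⟨t, rfl⟩ : ∃ t', t = t' + 1 := ⟨t - 1, by omega⟩
    rw [σAsc_succ, σAsc_succ]
    calc σAsc n t * σ n (t+1) * σ n (t+1+1) * σ n (t+1)
        = σAsc n t * (σ n (t+1) * σ n (t+1+1) * σ n (t+1)) := by group
      _ = (σAsc n t * σ n (t+1+1)) * (σ n (t+1) * σ n (t+1+1)) := by
          rw [σ_braid ht (by omega)]; group
      _ = σ n (t+1+1) * (σAsc n t * σ n (t+1) * σ n (t+1+1)) := by
          rw [← (σ_commute_σAsc le_rfl).eq]; group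
  | succ b htb ih =>
    rw [σAsc_succ, mul_assoc, ← (σ_commute (n := n) (show t + 2 ≤ b + 1 by omega)).eq,
      ← mul_assoc, ih (by omega), mul_assoc]

theorem piN_conj_σ {n t : ℕ} (ht : 1 ≤ t) (htn : t + 2 ≤ n) :
    piN n * σ n t * (piN n)⁻¹ = σ n (t+1) := by
  rw [piN_eq_σAsc, σAsc_mul_σ ht (by omega) (by omega), mul_inv_cancel_right]

theorem piN_conj_A {n i j : ℕ} (hi : 1 ≤ i) (hij : i < j) (hjn : j < n) :
    piN n * A n i j * (piN n)⁻¹ = A n (i+1) (j+1) := by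
  induction j, hij using Nat.le_induction with
  | base =>
    rw [A_self_succ, A_self_succ, ← piN_conj_σ hi (by omega)]
    simp only [sq]; group
  | succ j hij ih =>
    rw [A_succ hij, A_succ (by omega), ← piN_conj_σ (n := n) (t := j) (by omega) (by omega),
      ← ih (by omega)]
    group

theorem σAsc_conj_σ_sq {n m : ℕ} (hmn : m + 2 ≤ n) : ∃ e ∈ PureBraid n,
    σAsc n m * σ n (m+1) ^ 2 * (σAsc n m)⁻¹ = e * A n 1 (m+2) * e⁻¹ := by
  induction m with
  | zero => exact ⟨1, one_mem _, by simp [σAsc, A_self_succ]⟩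
  | succ m ih =>
    obtain ⟨e, he, heq⟩ := ih (by omega)
    have hc : Commute (σ n (m+2)) (σAsc n m) := σ_commute_σAsc le_rfl
    refine ⟨(σ n (m+2))⁻¹ * e * (σ n (m+2))⁻¹, ?_, ?_⟩
    · rw [show (σ n (m+2))⁻¹ * e * (σ n (m+2))⁻¹
          = (σ n (m+2))⁻¹ * e * σ n (m+2) * (σ n (m+2) ^ 2)⁻¹ by simp only [sq]; group]
      exact mul_mem ((pureBraid_normal n).conj_mem' e he _) (inv_mem (σ_sq_mem n _))
    show σAsc n (m+1) * σ n (m+2) ^ 2 * (σAsc n (m+1))⁻¹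
      = _ * A n 1 (m+2+1) * _
    calc σAsc n (m+1) * σ n (m+2) ^ 2 * (σAsc n (m+1))⁻¹
        = σAsc n m * (σ n (m+1) * σ n (m+1+1) ^ 2 * (σ n (m+1))⁻¹) * (σAsc n m)⁻¹ := by
          rw [σAsc_succ]; group
      _ = (σ n (m+2))⁻¹ * (σAsc n m * σ n (m+1) ^ 2 * (σAsc n m)⁻¹) * σ n (m+2) := by
          rw [σ_mul_σ_succ_sq_mul_σ_inv (by omega) (by omega)]
          simpa only [inv_inv] using hc.symm.inv_right.conj_conj (σ n (m+1) ^ 2)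
      _ = _ := by rw [heq, A_succ (j := m+2) (by omega)]; group

theorem piN_conj_A_last {n i : ℕ} (hi : 1 ≤ i) (hin : i < n) : ∃ e ∈ PureBraid n,
    piN n * A n i n * (piN n)⁻¹ = e * A n 1 (i+1) * e⁻¹ := by
  obtain ⟨d, hd⟩ : ∃ d, i + d + 1 = n := ⟨n - 1 - i, by omega⟩
  induction d generalizing i with
  | zero =>
    obtain ⟨m, rfl⟩ : ∃ m, i = m + 1 := ⟨i - 1, by omega⟩
    obtain rfl : n = m + 2 := by omega
    obtain ⟨e, he, heq⟩ := σAsc_conj_σ_sq (n := m + 2) (m := m) le_rfl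
    refine ⟨e, he, ?_⟩
    rw [show A (m+2) (m+1) (m+2) = σ (m+2) (m+1) ^ 2 from A_self_succ _ _, piN_eq_σAsc,
      show m + 2 - 1 = m + 1 from rfl, σAsc_succ, ← heq]
    simp only [sq]; group
  | succ d ih =>
    obtain ⟨e, he, heq⟩ := ih (i := i + 1) (by omega) (by omega) (by omega)
    refine ⟨(σ n (i+1))⁻¹ * e * σ n (i+1), (pureBraid_normal n).conj_mem' e he _, ?_⟩
    calc piN n * A n i n * (piN n)⁻¹
        = (piN n * σ n i * (piN n)⁻¹)⁻¹ *
          (piN n * (σ n i * A n i n * (σ n i)⁻¹) * (piN n)⁻¹) *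
          (piN n * σ n i * (piN n)⁻¹) := by group
      _ = (σ n (i+1))⁻¹ * (e * A n 1 (i+1+1) * e⁻¹) * σ n (i+1) := by
          rw [piN_conj_σ hi (by omega), σ_conj_A hi (by omega) le_rfl, heq]
      _ = _ := by rw [A_succ (j := i+1) (by omega)]; group

theorem P_le_pureBraid (n : ℕ) : P n n ≤ PureBraid n := by
  rw [P, Subgroup.closure_le]
  rintro _ ⟨i, -, rfl⟩
  exact A_mem_pure n i n

theorem closureA_le_pureBraid (n m : ℕ) : closureA n m ≤ PureBraid n := by
  rw [closureA, Subgroup.closure_le]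
  rintro _ ⟨i, j, -, -, -, rfl⟩
  exact A_mem_pure n i j

namespace IsNabla

variable {n : ℕ} {nabla : ↥(PureBraid n) →* ↥(PureBraid n)}

theorem comp_conjPiHom_Agen (h : IsNabla n nabla) {i j : ℕ} (hi : 1 ≤ i) (hij : i < j)
    (hjn : j < n) : nabla.comp (conjPiHom n) (Agen n i j) = Agen n i j := by
  have hconj : conjPiHom n (Agen n i j) = Agen n (i+1) (j+1) :=
    Subtype.ext (piN_conj_A hi hij hjn)
  rw [MonoidHom.comp_apply, hconj, h.2 (i+1) (j+1) (by omega) (by omega) hjn]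
  rfl

theorem comp_conjPiHom_Agen_last (h : IsNabla n nabla) {i : ℕ} (hi : 1 ≤ i) (hin : i < n) :
    nabla.comp (conjPiHom n) (Agen n i n) = 1 := by
  obtain ⟨e, he, heq⟩ := piN_conj_A_last hi hin
  have hconj : conjPiHom n (Agen n i n) = ⟨e, he⟩ * Agen n 1 (i+1) * (⟨e, he⟩)⁻¹ :=
    Subtype.ext heq
  rw [MonoidHom.comp_apply, hconj, map_mul, map_mul, h.1 (i+1) (by omega) hin, mul_one,
    map_inv, mul_inv_cancel]

theorem subgroupOf_P_le_ker (h : IsNabla n nabla) :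
    (P n n).subgroupOf (PureBraid n) ≤ (nabla.comp (conjPiHom n)).ker := by
  have hS : (fun i => A n i n) '' Set.Ico 1 n ⊆ PureBraid n := by
    rintro _ ⟨i, -, rfl⟩
    exact A_mem_pure n i n
  rw [P, Subgroup.subgroupOf_closure_eq hS, Subgroup.closure_le]
  rintro b ⟨i, ⟨hi, hin⟩, hb⟩
  rw [SetLike.mem_coe, MonoidHom.mem_ker, show b = Agen n i n from Subtype.ext hb.symm]
  exact h.comp_conjPiHom_Agen_last hi hin

theorem comp_conjPiHom_eq_self (h : IsNabla n nabla) {b : ↥(PureBraid n)}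
    (hb : (b : BraidGroup n) ∈ closureA n (n-1)) : nabla.comp (conjPiHom n) b = b := by
  have hS : {x | ∃ i j, 1 ≤ i ∧ i < j ∧ j ≤ n - 1 ∧ x = A n i j} ⊆ PureBraid n := by
    rintro _ ⟨i, j, -, -, -, rfl⟩
    exact A_mem_pure n i j
  rw [← Subgroup.mem_subgroupOf, closureA, Subgroup.subgroupOf_closure_eq hS] at hb
  refine MonoidHom.eqOn_closure (g := MonoidHom.id _) ?_ hb
  rintro b ⟨i, j, hi, hij, hjn, hb⟩
  rw [show b = Agen n i j from Subtype.ext hb]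
  exact h.comp_conjPiHom_Agen hi hij (by omega)

theorem ker_comp_conjPiHom (h : IsNabla n nabla) :
    (nabla.comp (conjPiHom n)).ker = (P n n).subgroupOf (PureBraid n) := by
  refine le_antisymm (fun b hb => ?_) h.subgroupOf_P_le_ker
  obtain ⟨p, hp, q, hq, hpq⟩ := mem_closureA_iff_exists_mul.mp (pureBraid_le_closureA n b.2)
  let p' : ↥(PureBraid n) := ⟨p, P_le_pureBraid n hp⟩
  let q' : ↥(PureBraid n) := ⟨q, closureA_le_pureBraid n _ hq⟩
  have hb' : b = p' * q' := Subtype.ext hpq.symm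
  have hq' : q' = 1 := by
    rw [MonoidHom.mem_ker, hb', map_mul, h.subgroupOf_P_le_ker hp, one_mul,
      h.comp_conjPiHom_eq_self hq] at hb
    exact hb
  rw [Subgroup.mem_subgroupOf, hb', hq', mul_one]
  exact hp

end IsNabla

theorem ker_Phi_eq_general (n : ℕ)
    (nabla : ↥(PureBraid n) →* ↥(PureBraid n)) (hnabla : IsNabla n nabla) :
    MonoidHom.ker (nabla.comp (conjPiHom n)) = (P n n).subgroupOf (PureBraid n) ∧
    W1 n = { w | ∃ b : ↥(PureBraid n),
      b ∈ MonoidHom.ker (nabla.comp (conjPiHom n)) ∧ w = piN n * ↑b } := by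
  rw [hnabla.ker_comp_conjPiHom]
  refine ⟨rfl, Set.ext fun w => ⟨?_, ?_⟩⟩
  · rintro ⟨b, hb, rfl⟩
    exact ⟨⟨b, P_le_pureBraid n hb⟩, hb, rfl⟩
  · rintro ⟨b, hb, rfl⟩
    exact ⟨b, hb, rfl⟩

/-- With `Φ_n = ∇ ∘ (α ↦ π_n α π_n⁻¹)`, the kernel of `Φ_n`
equals `P_n^n`; consequently `W_n^1 = π_n · ker Φ_n`. -/
theorem ker_Phi_eq (n : ℕ) (hn : 2 ≤ n)
    (nabla : ↥(PureBraid n) →* ↥(PureBraid n)) (hnabla : IsNabla n nabla) :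
    MonoidHom.ker (nabla.comp (conjPiHom n)) = (P n n).subgroupOf (PureBraid n) ∧
    W1 n = { w | ∃ b : ↥(PureBraid n),
      b ∈ MonoidHom.ker (nabla.comp (conjPiHom n)) ∧ w = piN n * ↑b } :=
  ker_Phi_eq_general n nabla hnabla
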